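/- arXiv:1803.10801 — 2 statements merged into one kernel-verified Lean document; each statement's English description precedes it below -/
import Mathlib

section
/- Let i be a continuous ℝ≥0-bilinear symmetric pairing on a cone V, φ a linear automorphism of V preserving i, and λ₋ ∈ V with φ(λ₋) = α^{-1}·λ₋ for some α > 1. Fix ν ∈ V and suppose there are constants C₁, C₂ > 0 with i(μ, λ₋) ≤ C₁·i(μ, ν) for all μ ∈ V, and i(μ, λ₋) ≥ C₂·i(μ, ν) for all μ in a subset K ⊆ V. Then for all μ ∈ K and all n ≥ 0: i(φⁿ(μ), ν) ≥ (C₂/C₁)·αⁿ·i(μ, ν). -/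
open scoped NNReal

/-!
Since `φ` preserves `i` and scales `λ₋` by `α⁻¹`, pairing against `λ₋` grows like `αⁿ` along the
orbit: `αⁿ i(μ, λ₋) ≤ i(φⁿ μ, λ₋)`. The comparison constants transfer this growth to pairing
against `ν`: `C₂ αⁿ i(μ, ν) ≤ αⁿ i(μ, λ₋) ≤ i(φⁿ μ, λ₋) ≤ C₁ i(φⁿ μ, ν)`.
-/

section Pairing

variable {V : Type*} [AddCommMonoid V] [Module ℝ≥0 V] (i : V → V → ℝ≥0)

theorem pairing_smul_right (hsymm : ∀ μ ν, i μ ν = i ν μ)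
    (hbilin : ∀ (a b : ℝ≥0) (μ μ' ν : V), i (a • μ + b • μ') ν = a * i μ ν + b * i μ' ν)
    (a : ℝ≥0) (μ ν : V) : i μ (a • ν) = a * i μ ν := by
  rw [hsymm, hsymm μ]
  simpa using hbilin a 0 ν 0 μ

variable {i} (hsmul : ∀ (a : ℝ≥0) (μ ν : V), i μ (a • ν) = a * i μ ν)
  {φ : V →ₗ[ℝ≥0] V} (hpres : ∀ μ ν, i (φ μ) (φ ν) = i μ ν)
  {lam : V} {c : ℝ≥0} (heig : φ lam = c • lam)
include hsmul hpres heig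

theorem pairing_eq_pow_mul_pairing_pow_apply (μ : V) (n : ℕ) :
    i μ lam = c ^ n * i ((φ ^ n) μ) lam := by
  induction n with
  | zero => simp
  | succ n ih =>
    rw [ih, ← hpres, heig, hsmul, pow_succ' φ, Module.End.mul_apply, pow_succ c, mul_assoc]

theorem pow_inv_mul_pairing_le_pairing_pow_apply (μ : V) (n : ℕ) :
    c⁻¹ ^ n * i μ lam ≤ i ((φ ^ n) μ) lam :=
  calc c⁻¹ ^ n * i μ lam = (c⁻¹ * c) ^ n * i ((φ ^ n) μ) lam := by
        rw [pairing_eq_pow_mul_pairing_pow_apply hsmul hpres heig μ n, mul_pow, mul_assoc]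
    _ ≤ 1 ^ n * i ((φ ^ n) μ) lam := by gcongr; exact inv_mul_le_one
    _ = i ((φ ^ n) μ) lam := by rw [one_pow, one_mul]

end Pairing

theorem stmt11_general {V : Type*} [AddCommMonoid V] [Module ℝ≥0 V]
    (i : V → V → ℝ≥0)
    (hsymm : ∀ μ ν, i μ ν = i ν μ)
    (hbilin : ∀ (a b : ℝ≥0) (μ μ' ν : V),
      i (a • μ + b • μ') ν = a * i μ ν + b * i μ' ν)
    (φ : V →ₗ[ℝ≥0] V)
    (hpres : ∀ μ ν, i (φ μ) (φ ν) = i μ ν)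
    (lamMinus : V) (α : ℝ≥0) (heig : φ lamMinus = α⁻¹ • lamMinus)
    (ν : V) (K : Set V) (C₁ C₂ : ℝ≥0)
    (hupper : ∀ μ : V, i μ lamMinus ≤ C₁ * i μ ν)
    (hlower : ∀ μ ∈ K, C₂ * i μ ν ≤ i μ lamMinus) :
    ∀ μ ∈ K, ∀ n : ℕ, (C₂ / C₁) * α ^ n * i μ ν ≤ i ((φ ^ n) μ) ν := by
  intro μ hμ n
  have hgrowth := pow_inv_mul_pairing_le_pairing_pow_apply
    (pairing_smul_right i hsymm hbilin) hpres heig μ n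
  rw [inv_inv] at hgrowth
  rw [div_mul_eq_mul_div, div_mul_eq_mul_div]
  refine div_le_of_le_mul₀ zero_le zero_le ?_
  calc C₂ * α ^ n * i μ ν = α ^ n * (C₂ * i μ ν) := by ring
    _ ≤ α ^ n * i μ lamMinus := by gcongr; exact hlower μ hμ
    _ ≤ i ((φ ^ n) μ) lamMinus := hgrowth
    _ ≤ C₁ * i ((φ ^ n) μ) ν := hupper _
    _ = i ((φ ^ n) μ) ν * C₁ := mul_comm _ _

/-- Abstract "south" lemma: if `φ` preserves the pairing `i`, contracts `lamMinus` by
`α⁻¹` with `α > 1`, and `i (·, lamMinus)` is comparable to `i (·, ν)` (above on all of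
`V`, below on `K`), then `i (φⁿ μ, ν) ≥ (C₂/C₁)·αⁿ·i(μ, ν)` for `μ ∈ K`. -/
theorem stmt11 {V : Type*} [AddCommMonoid V] [Module ℝ≥0 V] [TopologicalSpace V]
    (i : V → V → ℝ≥0)
    (hcont : Continuous fun p : V × V => i p.1 p.2)
    (hsymm : ∀ μ ν, i μ ν = i ν μ)
    (hbilin : ∀ (a b : ℝ≥0) (μ μ' ν : V),
      i (a • μ + b • μ') ν = a * i μ ν + b * i μ' ν)
    (φ ψ : V →ₗ[ℝ≥0] V) (hinv₁ : ∀ v, ψ (φ v) = v) (hinv₂ : ∀ v, φ (ψ v) = v)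
    (hpres : ∀ μ ν, i (φ μ) (φ ν) = i μ ν)
    (lamMinus : V) (α : ℝ≥0) (hα : 1 < α) (heig : φ lamMinus = α⁻¹ • lamMinus)
    (ν : V) (K : Set V) (C₁ C₂ : ℝ≥0) (hC₁ : 0 < C₁) (hC₂ : 0 < C₂)
    (hupper : ∀ μ : V, i μ lamMinus ≤ C₁ * i μ ν)
    (hlower : ∀ μ ∈ K, C₂ * i μ ν ≤ i μ lamMinus) :
    ∀ μ ∈ K, ∀ n : ℕ, (C₂ / C₁) * α ^ n * i μ ν ≤ i ((φ ^ n) μ) ν :=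
  stmt11_general i hsymm hbilin φ hpres lamMinus α heig ν K C₁ C₂ hupper hlower
end

section
/- Let ℓ : G → ℝ≥0 be the word length on a group G with respect to a finite symmetric generating set, extended to conjugacy classes by taking the minimum over the class. In the free group F₂ = ⟨a, b⟩ with generating set G = {a^{±1}, b^{±1}, a^{±2}}, the word length of the conjugacy class of a^{2n}b equals n + 1 for every n ≥ 1. -/
open scoped BigOperators

/-- The free group on two generators `a`, `b`. -/
noncomputable abbrev F₂ : Type := FreeGroup Bool

noncomputable def genA : F₂ := FreeGroup.of true
noncomputable def genB : F₂ := FreeGroup.of false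

/-- The (non-simple) symmetric generating set `{a^{±1}, b^{±1}, a^{±2}}`. -/
noncomputable def genSet : Set F₂ :=
  {genA, genA⁻¹, genB, genB⁻¹, genA ^ 2, (genA ^ 2)⁻¹}

/-- Word length of `g` with respect to `genSet`: the least length of a list of
generators whose product is `g`. -/
noncomputable def wordLen (g : F₂) : ℕ :=
  sInf {m : ℕ | ∃ l : List F₂, l.length = m ∧ (∀ x ∈ l, x ∈ genSet) ∧ l.prod = g}

/-- Conjugacy length: minimum of the word length over the conjugacy class. -/
noncomputable def conjLen (g : F₂) : ℕ :=
  sInf {m : ℕ | ∃ h : F₂, wordLen (h * g * h⁻¹) = m}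

/-! ### Auxiliary machinery: exponent-sum homomorphisms -/

noncomputable def φ1 : F₂ →* Multiplicative ℤ :=
  FreeGroup.lift (fun x => if x then Multiplicative.ofAdd 1 else 1)

noncomputable def φ2 : F₂ →* Multiplicative ℤ :=
  FreeGroup.lift (fun x => if x then 1 else Multiplicative.ofAdd 1)

noncomputable def c1 (g : F₂) : ℤ := Multiplicative.toAdd (φ1 g)
noncomputable def c2 (g : F₂) : ℤ := Multiplicative.toAdd (φ2 g)

lemma c1_mul (x y : F₂) : c1 (x * y) = c1 x + c1 y := by
  simp [c1, map_mul]

lemma c2_mul (x y : F₂) : c2 (x * y) = c2 x + c2 y := by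
  simp [c2, map_mul]

lemma c1_inv (x : F₂) : c1 x⁻¹ = - c1 x := by simp [c1, map_inv]

lemma c2_inv (x : F₂) : c2 x⁻¹ = - c2 x := by simp [c2, map_inv]

lemma c1_genA : c1 genA = 1 := by
  simp [c1, φ1, genA, FreeGroup.lift_apply_of]

lemma c1_genB : c1 genB = 0 := by
  simp [c1, φ1, genB, FreeGroup.lift_apply_of]

lemma c2_genA : c2 genA = 0 := by
  simp [c2, φ2, genA, FreeGroup.lift_apply_of]

lemma c2_genB : c2 genB = 1 := by
  simp [c2, φ2, genB, FreeGroup.lift_apply_of]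

lemma c1_pow (x : F₂) (k : ℕ) : c1 (x ^ k) = k * c1 x := by
  induction k with
  | zero => simp [c1]
  | succ k ih => rw [pow_succ, c1_mul, ih]; push_cast; ring

lemma c2_pow (x : F₂) (k : ℕ) : c2 (x ^ k) = k * c2 x := by
  induction k with
  | zero => simp [c2]
  | succ k ih => rw [pow_succ, c2_mul, ih]; push_cast; ring

lemma c1_conj (h g : F₂) : c1 (h * g * h⁻¹) = c1 g := by
  rw [c1_mul, c1_mul, c1_inv]; ring

lemma c2_conj (h g : F₂) : c2 (h * g * h⁻¹) = c2 g := by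
  rw [c2_mul, c2_mul, c2_inv]; ring

lemma c1_list_prod (l : List F₂) : c1 l.prod = (l.map c1).sum := by
  induction l with
  | nil => simp [c1]
  | cons x xs ih => simp [c1_mul, ih]

lemma c2_list_prod (l : List F₂) : c2 l.prod = (l.map c2).sum := by
  induction l with
  | nil => simp [c2]
  | cons x xs ih => simp [c2_mul, ih]

/-- The weight of each generator is at most 2. -/
lemma gen_weight (x : F₂) (hx : x ∈ genSet) : |c1 x| + 2 * |c2 x| ≤ 2 := by
  simp only [genSet, Set.mem_insert_iff, Set.mem_singleton_iff] at hx
  rcases hx with h | h | h | h | h | h <;> subst h <;>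
    simp [c1_inv, c2_inv, c1_pow, c2_pow, c1_genA, c1_genB, c2_genA, c2_genB]

lemma abs_sum_le (f : F₂ → ℤ) (l : List F₂) :
    |(l.map f).sum| ≤ (l.map (fun x => |f x|)).sum := by
  induction l with
  | nil => simp
  | cons x xs ih =>
    simp only [List.map_cons, List.sum_cons]
    calc |f x + (xs.map f).sum| ≤ |f x| + |(xs.map f).sum| := abs_add_le _ _
      _ ≤ |f x| + (xs.map (fun x => |f x|)).sum := by linarith

lemma sum_weight_le (l : List F₂) (hl : ∀ x ∈ l, x ∈ genSet) :
    (l.map (fun x => |c1 x| + 2 * |c2 x|)).sum ≤ 2 * l.length := by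
  induction l with
  | nil => simp
  | cons x xs ih =>
    have hx := gen_weight x (hl x (List.mem_cons_self))
    have hxs := ih (fun y hy => hl y (List.mem_cons_of_mem x hy))
    simp only [List.map_cons, List.sum_cons, List.length_cons]
    push_cast
    linarith

lemma sum_split (l : List F₂) :
    (l.map (fun x => |c1 x| + 2 * |c2 x|)).sum
      = (l.map (fun x => |c1 x|)).sum + 2 * (l.map (fun x => |c2 x|)).sum := by
  induction l with
  | nil => simp
  | cons x xs ih =>
    simp only [List.map_cons, List.sum_cons]
    rw [ih]; ring

/-- Lower bound: any list of generators whose product is a conjugate of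
`a^{2n} b` has length at least `n + 1`. -/
lemma list_lower (n : ℕ) (h : F₂) (l : List F₂)
    (hl : ∀ x ∈ l, x ∈ genSet) (hp : l.prod = h * (genA ^ (2 * n) * genB) * h⁻¹) :
    n + 1 ≤ l.length := by
  have h1 : (l.map c1).sum = (2 * n : ℤ) := by
    rw [← c1_list_prod, hp, c1_conj, c1_mul, c1_pow, c1_genA, c1_genB]; push_cast; ring
  have h2 : (l.map c2).sum = 1 := by
    rw [← c2_list_prod, hp, c2_conj, c2_mul, c2_pow, c2_genA, c2_genB]; ring
  have habs1 : (2 * n : ℤ) ≤ (l.map (fun x => |c1 x|)).sum := by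
    have := abs_sum_le c1 l
    rw [h1] at this
    calc (2 * n : ℤ) = |(2 * n : ℤ)| := by
          rw [abs_of_nonneg]; positivity
      _ ≤ _ := this
  have habs2 : (1 : ℤ) ≤ (l.map (fun x => |c2 x|)).sum := by
    have := abs_sum_le c2 l
    rw [h2] at this
    simpa using this
  have hsum := sum_weight_le l hl
  rw [sum_split] at hsum
  have : (n + 1 : ℤ) ≤ l.length := by linarith
  exact_mod_cast this

/-- Every element of `F₂` is a product of a list of generators. -/
lemma genA_mem : genA ∈ genSet := by simp [genSet]
lemma genB_mem : genB ∈ genSet := by simp [genSet]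
lemma genA_inv_mem : genA⁻¹ ∈ genSet := by simp [genSet]
lemma genB_inv_mem : genB⁻¹ ∈ genSet := by simp [genSet]
lemma genA2_mem : genA ^ 2 ∈ genSet := by simp [genSet]

/-- Every element of `F₂` is a product of a list of generators. -/
lemma exists_list (g : F₂) :
    ∃ l : List F₂, (∀ x ∈ l, x ∈ genSet) ∧ l.prod = g := by
  induction g using FreeGroup.induction_on with
  | C1 => exact ⟨[], by simp, by simp⟩
  | of x =>
    cases x
    · exact ⟨[genB], by simpa using genB_mem, by simp [genB]⟩
    · exact ⟨[genA], by simpa using genA_mem, by simp [genA]⟩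
  | inv_of x _ =>
    cases x
    · exact ⟨[genB⁻¹], by simpa using genB_inv_mem, by simp [genB]⟩
    · exact ⟨[genA⁻¹], by simpa using genA_inv_mem, by simp [genA]⟩
  | mul x y hx hy =>
    obtain ⟨l1, hl1, hp1⟩ := hx
    obtain ⟨l2, hl2, hp2⟩ := hy
    refine ⟨l1 ++ l2, ?_, by simp [hp1, hp2]⟩
    intro z hz
    rcases List.mem_append.1 hz with h | h
    · exact hl1 z h
    · exact hl2 z h

lemma wordLen_conj_ge (n : ℕ) (h : F₂) :
    n + 1 ≤ wordLen (h * (genA ^ (2 * n) * genB) * h⁻¹) := by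
  unfold wordLen
  obtain ⟨l, hl, hp⟩ := exists_list (h * (genA ^ (2 * n) * genB) * h⁻¹)
  apply le_csInf
  · exact ⟨l.length, l, rfl, hl, hp⟩
  rintro m ⟨l', rfl, hl', hp'⟩
  exact list_lower n h l' hl' hp'

lemma wordLen_le (n : ℕ) : wordLen (genA ^ (2 * n) * genB) ≤ n + 1 := by
  unfold wordLen
  apply Nat.sInf_le
  refine ⟨List.replicate n (genA ^ 2) ++ [genB], by simp, ?_, ?_⟩
  · intro x hx
    rcases List.mem_append.1 hx with h | h
    · rw [List.eq_of_mem_replicate h]; simp [genSet]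
    · simp at h; subst h; simp [genSet]
  · rw [List.prod_append, List.prod_replicate, ← pow_mul]
    simp

/-- The word length of the conjugacy class of `a^{2n} b` with respect to the
generating set `{a^{±1}, b^{±1}, a^{±2}}` equals `n + 1`, for every `n ≥ 1`. -/
theorem stmt13 (n : ℕ) (hn : 1 ≤ n) :
    conjLen (genA ^ (2 * n) * genB) = n + 1 := by
  unfold conjLen
  apply le_antisymm
  · calc sInf {m : ℕ | ∃ h : F₂, wordLen (h * (genA ^ (2 * n) * genB) * h⁻¹) = m}
        ≤ wordLen (1 * (genA ^ (2 * n) * genB) * 1⁻¹) := Nat.sInf_le ⟨1, rfl⟩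
      _ = wordLen (genA ^ (2 * n) * genB) := by rw [one_mul, inv_one, mul_one]
      _ ≤ n + 1 := wordLen_le n
  · apply le_csInf
    · exact ⟨wordLen (1 * (genA ^ (2 * n) * genB) * 1⁻¹), 1, rfl⟩
    rintro m ⟨h, rfl⟩
    exact wordLen_conj_ge n h
end
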